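/- arXiv:2106.03936 — 4 statements merged into one kernel-verified Lean document; each statement's English description precedes it below -/
import Mathlib

section
/- Let d ≥ 1, let Ω = [0,1]^d, let x_1, …, x_N be pairwise distinct points of Ω, and let ν_1, …, ν_N be strictly positive real numbers with ν_1 + ⋯ + ν_N = 1. Then there exists a vector ψ ∈ ℝ^N such that for every i, the Lebesgue volume of the Laguerre cell Lag_i^ψ equals ν_i. -/
open MeasureTheory

/-- The unit cube `[0,1]^d` in Euclidean space. -/
def unitCube (d : ℕ) : Set (EuclideanSpace ℝ (Fin d)) :=
  {p | ∀ k, p k ∈ Set.Icc (0 : ℝ) 1}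

/-- The Laguerre cell of index `i`, relative to a set `Ω`, for points `x` and weights `ψ`. -/
def lagCell {d N : ℕ} (Ω : Set (EuclideanSpace ℝ (Fin d)))
    (x : Fin N → EuclideanSpace ℝ (Fin d)) (ψ : Fin N → ℝ) (i : Fin N) :
    Set (EuclideanSpace ℝ (Fin d)) :=
  {p ∈ Ω | ∀ j, ‖p - x i‖ ^ 2 - ψ i ≤ ‖p - x j‖ ^ 2 - ψ j}

/-!
The weights are a maximiser of Kantorovich's dual functional
`Φ(ψ) = ∑ ν_i ψ_i - ∫_Ω max_j (ψ_j - ‖p - x_j‖²)`.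
`Φ` is continuous and, since `∑ ν_i = |Ω|`, invariant under adding a constant to `ψ`;
normalised to `min ψ = 0` it tends to `-∞` as `max ψ → ∞`, so it attains its maximum.
Raising `ψ_i` by `t ≥ 0` raises the integral by at least `t |Lag_i(ψ)|` and at most
`t |Lag_i(ψ + t eᵢ)|`. At a maximiser this gives `|Lag_i(ψ + t eᵢ)| ≥ ν_i` for `t > 0` and
`≤ ν_i` for `t < 0`. Letting `t → 0`, and using that the bisectors between distinct points are
Lebesgue-null, `|Lag_i(ψ)| = ν_i`.
-/

open Filter Topology

section LaguerreEnvelope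

variable {ι E : Type*} [Fintype ι] [Nonempty ι] [SeminormedAddCommGroup E]

/-- Minus the `c`-transform of `ψ` for the quadratic cost. -/
noncomputable def laguerreEnvelope (x : ι → E) (ψ : ι → ℝ) (p : E) : ℝ :=
  Finset.univ.sup' Finset.univ_nonempty fun j => ψ j - ‖p - x j‖ ^ 2

variable {x : ι → E} {ψ φ : ι → ℝ} {p : E}

theorem le_laguerreEnvelope (j : ι) : ψ j - ‖p - x j‖ ^ 2 ≤ laguerreEnvelope x ψ p :=
  Finset.le_sup' (fun j => ψ j - ‖p - x j‖ ^ 2) (Finset.mem_univ j)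

theorem laguerreEnvelope_le {c : ℝ} (h : ∀ j, ψ j - ‖p - x j‖ ^ 2 ≤ c) :
    laguerreEnvelope x ψ p ≤ c :=
  Finset.sup'_le _ _ fun j _ => h j

theorem laguerreEnvelope_le_add {c : ℝ} (h : ∀ j, ψ j ≤ φ j + c) :
    laguerreEnvelope x ψ p ≤ laguerreEnvelope x φ p + c :=
  laguerreEnvelope_le fun j => by
    linarith [h j, le_laguerreEnvelope (x := x) (ψ := φ) (p := p) j]

theorem laguerreEnvelope_add_const (c : ℝ) :
    laguerreEnvelope x (fun j => ψ j + c) p = laguerreEnvelope x ψ p + c := by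
  have h : laguerreEnvelope x ψ p ≤ laguerreEnvelope x (fun j => ψ j + c) p + -c :=
    laguerreEnvelope_le_add fun j => by linarith
  exact le_antisymm (laguerreEnvelope_le_add fun _ => le_rfl) (by linarith)

theorem continuous_laguerreEnvelope : Continuous (laguerreEnvelope x ψ) :=
  Continuous.finset_sup'_apply _ fun _ _ => by fun_prop

end LaguerreEnvelope

theorem exists_forall_le_of_add_const_invariant {ι : Type*} [Fintype ι] [Nonempty ι]
    {f : (ι → ℝ) → ℝ} (hf : Continuous f) (hshift : ∀ φ c, f (fun i => φ i + c) = f φ)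
    {R : ℝ} (hR : 0 ≤ R)
    (hcoer : ∀ φ : ι → ℝ, (∀ k, 0 ≤ φ k) → (∃ i, φ i = 0) → (∃ j, R < φ j) → f φ ≤ f 0) :
    ∃ ψ, ∀ φ, f φ ≤ f ψ := by
  have h0K : (0 : ι → ℝ) ∈ Set.univ.pi fun _ => Set.Icc 0 R := fun _ _ => ⟨le_rfl, hR⟩
  obtain ⟨ψ, -, hψ⟩ :=
    (isCompact_univ_pi fun _ => isCompact_Icc).exists_isMaxOn ⟨0, h0K⟩ hf.continuousOn
  refine ⟨ψ, fun φ => ?_⟩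
  obtain ⟨i, hi⟩ := Finite.exists_min φ
  rw [← hshift φ (-φ i)]
  by_cases hlarge : ∃ j, R < φ j + -φ i
  · exact (hcoer _ (fun k => by linarith [hi k]) ⟨i, add_neg_cancel _⟩ hlarge).trans
      (hψ h0K)
  · simp only [not_exists, not_lt] at hlarge
    exact hψ fun k _ => ⟨by linarith [hi k], hlarge k⟩

section KantorovichDual

variable {ι E : Type*} [Fintype ι] [Nonempty ι] [NormedAddCommGroup E] [MeasurableSpace E]
  {μ : Measure E} {Ω : Set E} {x : ι → E} {ν : ι → ℝ}

/-- Kantorovich's dual functional for transporting `μ` restricted to `Ω` onto the masses `ν i`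
at the points `x i`. -/
noncomputable def kantorovichDual (μ : Measure E) (Ω : Set E) (x : ι → E) (ν ψ : ι → ℝ) :
    ℝ :=
  ∑ i, ν i * ψ i - ∫ p in Ω, laguerreEnvelope x ψ p ∂μ

theorem kantorovichDual_zero_nonneg : 0 ≤ kantorovichDual μ Ω x ν 0 := by
  have h : ∫ p in Ω, laguerreEnvelope x 0 p ∂μ ≤ 0 :=
    integral_nonpos fun p => laguerreEnvelope_le fun j => by simp
  simpa [kantorovichDual] using h

theorem kantorovichDual_add_single_sub [DecidableEq ι] (ψ : ι → ℝ) (i : ι) (t : ℝ) :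
    kantorovichDual μ Ω x ν (ψ + Pi.single i t) - kantorovichDual μ Ω x ν ψ
      = ν i * t - (∫ p in Ω, laguerreEnvelope x (ψ + Pi.single i t) p ∂μ
        - ∫ p in Ω, laguerreEnvelope x ψ p ∂μ) := by
  simp only [kantorovichDual, Pi.add_apply, mul_add, Finset.sum_add_distrib, Pi.single_apply,
    mul_ite, mul_zero, Finset.sum_ite_eq', Finset.mem_univ, if_true]
  ring

variable [OpensMeasurableSpace E] [IsFiniteMeasureOnCompacts μ]

theorem integrableOn_laguerreEnvelope (hΩ : IsCompact Ω) (ψ : ι → ℝ) :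
    IntegrableOn (laguerreEnvelope x ψ) Ω μ :=
  continuous_laguerreEnvelope.continuousOn.integrableOn_compact hΩ

theorem abs_integral_laguerreEnvelope_sub_le (hΩ : IsCompact Ω) (ψ φ : ι → ℝ) :
    |∫ p in Ω, laguerreEnvelope x ψ p ∂μ - ∫ p in Ω, laguerreEnvelope x φ p ∂μ|
      ≤ dist ψ φ * μ.real Ω := by
  rw [← Real.norm_eq_abs,
    ← integral_sub (integrableOn_laguerreEnvelope hΩ ψ) (integrableOn_laguerreEnvelope hΩ φ)]
  refine norm_setIntegral_le_of_norm_le_const hΩ.measure_lt_top fun p _ => ?_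
  have hcoord : ∀ j, |ψ j - φ j| ≤ dist ψ φ := fun j => dist_le_pi_dist ψ φ j
  have hψφ : ∀ j, ψ j ≤ φ j + dist ψ φ := fun j => by linarith [(abs_le.1 (hcoord j)).2]
  have hφψ : ∀ j, φ j ≤ ψ j + dist ψ φ := fun j => by linarith [(abs_le.1 (hcoord j)).1]
  rw [Real.norm_eq_abs, abs_sub_le_iff]
  exact ⟨by linarith [laguerreEnvelope_le_add (x := x) (p := p) hψφ],
    by linarith [laguerreEnvelope_le_add (x := x) (p := p) hφψ]⟩

theorem continuous_kantorovichDual (hΩ : IsCompact Ω) :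
    Continuous (kantorovichDual μ Ω x ν) := by
  have hLip :
      LipschitzWith (μ.real Ω).toNNReal fun ψ => ∫ p in Ω, laguerreEnvelope x ψ p ∂μ :=
    LipschitzWith.of_dist_le_mul fun ψ φ => by
      rw [Real.dist_eq, Real.coe_toNNReal _ measureReal_nonneg, mul_comm]
      exact abs_integral_laguerreEnvelope_sub_le hΩ ψ φ
  exact (continuous_finsetSum _ fun i _ => continuous_const.mul (continuous_apply i)).sub
    hLip.continuous

theorem kantorovichDual_add_const (hΩ : IsCompact Ω) (hsum : ∑ i, ν i = μ.real Ω)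
    (ψ : ι → ℝ) (c : ℝ) :
    kantorovichDual μ Ω x ν (fun i => ψ i + c) = kantorovichDual μ Ω x ν ψ := by
  simp only [kantorovichDual, laguerreEnvelope_add_const, mul_add, Finset.sum_add_distrib,
    ← Finset.sum_mul, hsum]
  rw [integral_add (integrableOn_laguerreEnvelope hΩ ψ)
    (integrableOn_const hΩ.measure_lt_top.ne), setIntegral_const, smul_eq_mul]
  ring

theorem kantorovichDual_le (hΩ : IsCompact Ω) (hν : ∀ i, 0 ≤ ν i)
    (hsum : ∑ i, ν i = μ.real Ω) {φ : ι → ℝ} {i j : ι} (hi : φ i = 0) (hj : ∀ k, φ k ≤ φ j) :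
    kantorovichDual μ Ω x ν φ ≤ ∫ p in Ω, ‖p - x j‖ ^ 2 ∂μ - ν i * φ j := by
  have hsum_le : ∑ k, ν k * φ k + ν i * φ j ≤ μ.real Ω * φ j := by
    have h := Finset.single_le_sum (f := fun k => ν k * (φ j - φ k))
      (fun k _ => mul_nonneg (hν k) (sub_nonneg.2 (hj k))) (Finset.mem_univ i)
    simp only [mul_sub, Finset.sum_sub_distrib, ← Finset.sum_mul, hsum, hi, sub_zero] at h
    linarith
  have hconst : IntegrableOn (fun _ => φ j) Ω μ := integrableOn_const hΩ.measure_lt_top.ne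
  have hsq : IntegrableOn (fun p => ‖p - x j‖ ^ 2) Ω μ :=
    (by fun_prop : Continuous fun p => ‖p - x j‖ ^ 2).continuousOn.integrableOn_compact hΩ
  have hint : ∫ p in Ω, (φ j - ‖p - x j‖ ^ 2) ∂μ ≤ ∫ p in Ω, laguerreEnvelope x φ p ∂μ :=
    integral_mono (hconst.sub hsq) (integrableOn_laguerreEnvelope hΩ φ) fun p =>
      le_laguerreEnvelope j
  rw [integral_sub hconst hsq, setIntegral_const, smul_eq_mul] at hint
  unfold kantorovichDual
  linarith

theorem exists_forall_kantorovichDual_le (hΩ : IsCompact Ω) (hν : ∀ i, 0 < ν i)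
    (hsum : ∑ i, ν i = μ.real Ω) :
    ∃ ψ, ∀ φ, kantorovichDual μ Ω x ν φ ≤ kantorovichDual μ Ω x ν ψ := by
  set C := ∑ j, ∫ p in Ω, ‖p - x j‖ ^ 2 ∂μ
  have hC : ∀ j, 0 ≤ ∫ p in Ω, ‖p - x j‖ ^ 2 ∂μ := fun j =>
    integral_nonneg fun p => sq_nonneg _
  obtain ⟨m, hm⟩ := Finite.exists_min ν
  refine exists_forall_le_of_add_const_invariant (continuous_kantorovichDual hΩ)
    (kantorovichDual_add_const hΩ hsum) (R := C / ν m)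
    (div_nonneg (Finset.sum_nonneg fun j _ => hC j) (hν m).le) ?_
  rintro φ hφ ⟨i, hi⟩ ⟨j, hj⟩
  obtain ⟨k, hk⟩ := Finite.exists_max φ
  have hCk : ∫ p in Ω, ‖p - x k‖ ^ 2 ∂μ ≤ C :=
    Finset.single_le_sum (fun j _ => hC j) (Finset.mem_univ k)
  have hlarge : C < ν i * φ k :=
    calc C = ν m * (C / ν m) := by field_simp [(hν m).ne']
      _ < ν m * φ k := mul_lt_mul_of_pos_left (hj.trans_le (hk j)) (hν m)
      _ ≤ ν i * φ k := mul_le_mul_of_nonneg_right (hm i) (hφ k)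
  linarith [kantorovichDual_le (x := x) hΩ (fun i => (hν i).le) hsum hi hk,
    kantorovichDual_zero_nonneg (μ := μ) (Ω := Ω) (x := x) (ν := ν)]

end KantorovichDual

theorem addHaar_preimage_singleton_eq_zero {E : Type*} [NormedAddCommGroup E]
    [NormedSpace ℝ E] [MeasurableSpace E] [BorelSpace E] [FiniteDimensional ℝ E] (μ : Measure E)
    [μ.IsAddHaarMeasure] {f : E →ₗ[ℝ] ℝ} (hf : f ≠ 0) (c : ℝ) : μ (f ⁻¹' {c}) = 0 := by
  obtain ⟨p₀, hp₀⟩ := LinearMap.surjective_of_ne_zero hf c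
  have hfiber : f ⁻¹' {c} = (fun p => p + -p₀) ⁻¹' LinearMap.ker f := by
    ext p
    simp [hp₀, add_neg_eq_zero]
  rw [hfiber, measure_preimage_add_right]
  exact Measure.addHaar_submodule μ _ (mt LinearMap.ker_eq_top.1 hf)

theorem addHaar_setOf_norm_sub_sq_sub_eq_eq_zero {E : Type*} [NormedAddCommGroup E]
    [InnerProductSpace ℝ E] [MeasurableSpace E] [BorelSpace E] [FiniteDimensional ℝ E]
    (μ : Measure E) [μ.IsAddHaarMeasure] {a b : E} (hab : a ≠ b) (c c' : ℝ) :
    μ {p | ‖p - a‖ ^ 2 - c = ‖p - b‖ ^ 2 - c'} = 0 := by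
  have hbisector : {p | ‖p - a‖ ^ 2 - c = ‖p - b‖ ^ 2 - c'}
      = innerₛₗ ℝ (b - a) ⁻¹' {(‖b‖ ^ 2 - ‖a‖ ^ 2 + c - c') / 2} := by
    ext p
    simp only [Set.mem_ofPred_eq, Set.mem_preimage, Set.mem_singleton_iff, innerₛₗ_apply_apply,
      norm_sub_sq_real, inner_sub_left, real_inner_comm a p, real_inner_comm b p]
    constructor <;> intro h <;> linarith
  have hne : innerₛₗ ℝ (b - a) ≠ 0 := fun h => by
    have hself : inner ℝ (b - a) (b - a) = 0 := LinearMap.congr_fun h (b - a)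
    exact hab (sub_eq_zero.1 (inner_self_eq_zero.1 hself)).symm
  rw [hbisector]
  exact addHaar_preimage_singleton_eq_zero μ hne _

section LaguerreCell

variable {d N : ℕ} {Ω : Set (EuclideanSpace ℝ (Fin d))}
  {x : Fin N → EuclideanSpace ℝ (Fin d)} {ψ : Fin N → ℝ} {i : Fin N}
  {p : EuclideanSpace ℝ (Fin d)} {t : ℝ}

theorem mem_lagCell_add_single_iff :
    p ∈ lagCell Ω x (ψ + Pi.single i t) i
      ↔ p ∈ Ω ∧ ∀ j ≠ i, ‖p - x i‖ ^ 2 - ψ i - t ≤ ‖p - x j‖ ^ 2 - ψ j := by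
  refine and_congr_right fun _ => forall_congr' fun j => ?_
  rcases eq_or_ne j i with rfl | hj
  · simp
  · simp [hj, sub_sub]

theorem mem_lagCell_iff :
    p ∈ lagCell Ω x ψ i
      ↔ p ∈ Ω ∧ ∀ j ≠ i, ‖p - x i‖ ^ 2 - ψ i ≤ ‖p - x j‖ ^ 2 - ψ j := by
  simpa using mem_lagCell_add_single_iff (Ω := Ω) (x := x) (ψ := ψ) (i := i) (p := p) (t := 0)

theorem monotone_lagCell_add_single :
    Monotone fun t => lagCell Ω x (ψ + Pi.single i t) i := fun s t hst p hp => by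
  rw [mem_lagCell_add_single_iff] at hp ⊢
  exact ⟨hp.1, fun j hj => by linarith [hp.2 j hj]⟩

theorem isClosed_lagCell (hΩ : IsClosed Ω) (x : Fin N → EuclideanSpace ℝ (Fin d))
    (ψ : Fin N → ℝ) (i : Fin N) : IsClosed (lagCell Ω x ψ i) := by
  rw [lagCell, ← Set.inter_ofPred_eq_sep, Set.ofPred_forall]
  exact hΩ.inter (isClosed_iInter fun _ => isClosed_le (by fun_prop) (by fun_prop))

theorem add_single_le_add (ht : 0 ≤ t) (j : Fin N) :
    (ψ + Pi.single i t : Fin N → ℝ) j ≤ ψ j + t := by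
  rcases eq_or_ne j i with rfl | hj <;> simp [*]

variable {μ : Measure (EuclideanSpace ℝ (Fin d))} {ν : Fin N → ℝ}

theorem measure_lagCell_lt_top [IsFiniteMeasureOnCompacts μ] (hΩ : IsCompact Ω) :
    μ (lagCell Ω x ψ i) < ⊤ :=
  (measure_mono (Set.sep_subset _ _)).trans_lt hΩ.measure_lt_top

theorem setIntegral_indicator_lagCell (hΩ : IsClosed Ω) (ψ : Fin N → ℝ) (c : ℝ) :
    ∫ p in Ω, (lagCell Ω x ψ i).indicator (fun _ => c) p ∂μ = c * μ.real (lagCell Ω x ψ i) := by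
  rw [setIntegral_indicator (isClosed_lagCell hΩ x ψ i).measurableSet,
    Set.inter_eq_right.2 (show lagCell Ω x ψ i ⊆ Ω from Set.sep_subset _ _), setIntegral_const,
    smul_eq_mul, mul_comm]

variable [NeZero N]

theorem laguerreEnvelope_eq_of_mem_lagCell (hp : p ∈ lagCell Ω x ψ i) :
    laguerreEnvelope x ψ p = ψ i - ‖p - x i‖ ^ 2 :=
  le_antisymm (laguerreEnvelope_le fun j => by linarith [hp.2 j]) (le_laguerreEnvelope i)

theorem laguerreEnvelope_add_single_sub_le (ht : 0 ≤ t) (hp : p ∈ Ω) :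
    laguerreEnvelope x (ψ + Pi.single i t) p - laguerreEnvelope x ψ p
      ≤ (lagCell Ω x (ψ + Pi.single i t) i).indicator (fun _ => t) p := by
  by_cases hcell : p ∈ lagCell Ω x (ψ + Pi.single i t) i
  · rw [Set.indicator_of_mem hcell]
    linarith [laguerreEnvelope_le_add (x := x) (p := p) (add_single_le_add (ψ := ψ) (i := i) ht)]
  · rw [Set.indicator_of_notMem hcell, sub_nonpos]
    simp only [mem_lagCell_add_single_iff, not_and, not_forall, not_le] at hcell
    obtain ⟨j, hji, hj⟩ := hcell hp
    refine laguerreEnvelope_le fun k => ?_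
    rcases eq_or_ne k i with rfl | hk
    · simp only [Pi.add_apply, Pi.single_eq_same]
      linarith [le_laguerreEnvelope (x := x) (ψ := ψ) (p := p) j]
    · simpa [hk] using le_laguerreEnvelope (x := x) (ψ := ψ) (p := p) k

theorem indicator_lagCell_le_laguerreEnvelope_add_single_sub (ht : 0 ≤ t) :
    (lagCell Ω x ψ i).indicator (fun _ => t) p
      ≤ laguerreEnvelope x (ψ + Pi.single i t) p - laguerreEnvelope x ψ p := by
  by_cases hcell : p ∈ lagCell Ω x ψ i
  · rw [Set.indicator_of_mem hcell, laguerreEnvelope_eq_of_mem_lagCell hcell]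
    have h := le_laguerreEnvelope (x := x) (ψ := ψ + Pi.single i t) (p := p) i
    simp only [Pi.add_apply, Pi.single_eq_same] at h
    linarith
  · rw [Set.indicator_of_notMem hcell, sub_nonneg]
    simpa using laguerreEnvelope_le_add (x := x) (p := p) (ψ := ψ) (φ := ψ + Pi.single i t)
      (c := 0) fun j => by rcases eq_or_ne j i with rfl | hj <;> simp [*]

section FiniteOnCompacts

variable [IsFiniteMeasureOnCompacts μ]

theorem integral_laguerreEnvelope_add_single_sub_le (hΩ : IsCompact Ω) (ht : 0 ≤ t) :
    ∫ p in Ω, laguerreEnvelope x (ψ + Pi.single i t) p ∂μ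
        - ∫ p in Ω, laguerreEnvelope x ψ p ∂μ
      ≤ t * μ.real (lagCell Ω x (ψ + Pi.single i t) i) := by
  rw [← setIntegral_indicator_lagCell hΩ.isClosed, ← integral_sub
    (integrableOn_laguerreEnvelope hΩ _) (integrableOn_laguerreEnvelope hΩ _)]
  refine setIntegral_mono_on ((integrableOn_laguerreEnvelope hΩ _).sub
    (integrableOn_laguerreEnvelope hΩ _)) ?_ hΩ.measurableSet
    fun p hp => laguerreEnvelope_add_single_sub_le ht hp
  exact (integrableOn_const hΩ.measure_lt_top.ne).indicator
    (isClosed_lagCell hΩ.isClosed x _ i).measurableSet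

theorem mul_measureReal_lagCell_le_integral_laguerreEnvelope_add_single_sub (hΩ : IsCompact Ω)
    (ht : 0 ≤ t) :
    t * μ.real (lagCell Ω x ψ i)
      ≤ ∫ p in Ω, laguerreEnvelope x (ψ + Pi.single i t) p ∂μ
        - ∫ p in Ω, laguerreEnvelope x ψ p ∂μ := by
  rw [← setIntegral_indicator_lagCell hΩ.isClosed, ← integral_sub
    (integrableOn_laguerreEnvelope hΩ _) (integrableOn_laguerreEnvelope hΩ _)]
  refine integral_mono ?_ ((integrableOn_laguerreEnvelope hΩ _).sub
    (integrableOn_laguerreEnvelope hΩ _)) fun p =>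
      indicator_lagCell_le_laguerreEnvelope_add_single_sub ht
  exact (integrableOn_const hΩ.measure_lt_top.ne).indicator
    (isClosed_lagCell hΩ.isClosed x _ i).measurableSet

theorem le_measureReal_lagCell_add_single (hΩ : IsCompact Ω)
    (hmax : ∀ φ, kantorovichDual μ Ω x ν φ ≤ kantorovichDual μ Ω x ν ψ) (ht : 0 < t) :
    ν i ≤ μ.real (lagCell Ω x (ψ + Pi.single i t) i) := by
  have hdual := kantorovichDual_add_single_sub (μ := μ) (Ω := Ω) (x := x) (ν := ν) ψ i t
  have hint := integral_laguerreEnvelope_add_single_sub_le (μ := μ) (x := x) (ψ := ψ) (i := i)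
    hΩ ht.le
  have hle := hmax (ψ + Pi.single i t)
  exact le_of_mul_le_mul_right (by linarith) ht

theorem measureReal_lagCell_add_single_le (hΩ : IsCompact Ω)
    (hmax : ∀ φ, kantorovichDual μ Ω x ν φ ≤ kantorovichDual μ Ω x ν ψ) (ht : t < 0) :
    μ.real (lagCell Ω x (ψ + Pi.single i t) i) ≤ ν i := by
  have hdual := kantorovichDual_add_single_sub (μ := μ) (Ω := Ω) (x := x) (ν := ν) ψ i t
  have hint := mul_measureReal_lagCell_le_integral_laguerreEnvelope_add_single_sub (μ := μ)
    (x := x) (ψ := ψ + Pi.single i t) (i := i) hΩ (neg_nonneg.2 ht.le)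
  rw [add_assoc, ← Pi.single_add, add_neg_cancel, Pi.single_zero, add_zero] at hint
  have hle := hmax (ψ + Pi.single i t)
  exact le_of_mul_le_mul_right (by linarith) (neg_pos.2 ht)

theorem ofReal_le_measure_lagCell (hΩ : IsCompact Ω)
    (hmax : ∀ φ, kantorovichDual μ Ω x ν φ ≤ kantorovichDual μ Ω x ν ψ) :
    ENNReal.ofReal (ν i) ≤ μ (lagCell Ω x ψ i) := by
  set s : ℕ → Set (EuclideanSpace ℝ (Fin d)) :=
    fun n => lagCell Ω x (ψ + Pi.single i (1 / ((n : ℝ) + 1))) i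
  have hs : Antitone s := fun m n hmn =>
    monotone_lagCell_add_single (Nat.one_div_le_one_div hmn)
  have hcell : lagCell Ω x ψ i = ⋂ n, s n := by
    ext p
    simp only [Set.mem_iInter, s, mem_lagCell_add_single_iff]
    rw [mem_lagCell_iff]
    refine ⟨fun h n => ⟨h.1, fun j hj => ?_⟩, fun h => ⟨(h 0).1, fun j hj => ?_⟩⟩
    · have hε : (0 : ℝ) ≤ 1 / (n + 1) := by positivity
      linarith [h.2 j hj]
    · have hlim := (tendsto_one_div_add_atTop_nhds_zero_nat (𝕜 := ℝ)).const_sub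
        (‖p - x i‖ ^ 2 - ψ i)
      rw [sub_zero] at hlim
      exact le_of_tendsto' hlim fun n => (h n).2 j hj
  rw [hcell, hs.measure_iInter
    (fun n => (isClosed_lagCell hΩ.isClosed x _ i).measurableSet.nullMeasurableSet)
    ⟨0, (measure_lagCell_lt_top hΩ).ne⟩]
  exact le_iInf fun n =>
    ENNReal.ofReal_le_of_le_toReal (le_measureReal_lagCell_add_single hΩ hmax (by positivity))

end FiniteOnCompacts

theorem measure_lagCell_le_ofReal [μ.IsAddHaarMeasure] (hΩ : IsCompact Ω)
    (hx : Function.Injective x)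
    (hmax : ∀ φ, kantorovichDual μ Ω x ν φ ≤ kantorovichDual μ Ω x ν ψ) :
    μ (lagCell Ω x ψ i) ≤ ENNReal.ofReal (ν i) := by
  set s : ℕ → Set (EuclideanSpace ℝ (Fin d)) :=
    fun n => lagCell Ω x (ψ + Pi.single i (-(1 / ((n : ℝ) + 1)))) i
  have hs : Monotone s := fun m n hmn =>
    monotone_lagCell_add_single (neg_le_neg (Nat.one_div_le_one_div hmn))
  set Z := ⋃ j ∈ {j | j ≠ i}, {p | ‖p - x i‖ ^ 2 - ψ i = ‖p - x j‖ ^ 2 - ψ j}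
  have hZ : μ Z = 0 := (measure_biUnion_null_iff (Set.to_countable _)).2 fun j hj =>
    addHaar_setOf_norm_sub_sq_sub_eq_eq_zero μ (hx.ne (Ne.symm hj)) _ _
  have hcover : lagCell Ω x ψ i ⊆ (⋃ n, s n) ∪ Z := by
    intro p hp
    by_cases hpZ : p ∈ Z
    · exact Or.inr hpZ
    left
    simp only [Z, Set.mem_iUnion, Set.mem_ofPred_eq, not_exists] at hpZ
    rw [mem_lagCell_iff] at hp
    have hstrict : ∀ j ≠ i, ‖p - x i‖ ^ 2 - ψ i < ‖p - x j‖ ^ 2 - ψ j := fun j hj =>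
      (hp.2 j hj).lt_of_ne (hpZ j hj)
    have hev : ∀ᶠ n : ℕ in atTop,
        ∀ j ≠ i, ‖p - x i‖ ^ 2 - ψ i + 1 / (n + 1) < ‖p - x j‖ ^ 2 - ψ j :=
      eventually_all.2 fun j => (eventually_all.2 fun hj => by
        have hlim := (tendsto_one_div_add_atTop_nhds_zero_nat (𝕜 := ℝ)).const_add
          (‖p - x i‖ ^ 2 - ψ i)
        rw [add_zero] at hlim
        exact hlim.eventually_lt_const (hstrict j hj))
    obtain ⟨n, hn⟩ := hev.exists
    refine Set.mem_iUnion.2 ⟨n, mem_lagCell_add_single_iff.2 ⟨hp.1, fun j hj => ?_⟩⟩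
    linarith [hn j hj]
  calc μ (lagCell Ω x ψ i) ≤ μ ((⋃ n, s n) ∪ Z) := measure_mono hcover
    _ ≤ μ (⋃ n, s n) + μ Z := measure_union_le _ _
    _ = ⨆ n, μ (s n) := by rw [hZ, add_zero, hs.measure_iUnion]
    _ ≤ ENNReal.ofReal (ν i) := iSup_le fun n => by
      rw [← ofReal_measureReal (measure_lagCell_lt_top hΩ).ne]
      exact ENNReal.ofReal_le_ofReal
        (measureReal_lagCell_add_single_le hΩ hmax (neg_neg_of_pos Nat.one_div_pos_of_nat))

end LaguerreCell

theorem exists_measure_lagCell_eq_ofReal {d N : ℕ} [NeZero N]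
    {Ω : Set (EuclideanSpace ℝ (Fin d))} (hΩ : IsCompact Ω)
    (μ : Measure (EuclideanSpace ℝ (Fin d))) [μ.IsAddHaarMeasure]
    {x : Fin N → EuclideanSpace ℝ (Fin d)} (hx : Function.Injective x) {ν : Fin N → ℝ}
    (hν : ∀ i, 0 < ν i) (hsum : ∑ i, ν i = μ.real Ω) :
    ∃ ψ : Fin N → ℝ, ∀ i, μ (lagCell Ω x ψ i) = ENNReal.ofReal (ν i) := by
  obtain ⟨ψ, hmax⟩ := exists_forall_kantorovichDual_le (x := x) hΩ hν hsum
  exact ⟨ψ, fun i => le_antisymm (measure_lagCell_le_ofReal hΩ hx hmax)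
    (ofReal_le_measure_lagCell hΩ hmax)⟩

theorem unitCube_eq_preimage_ofLp (d : ℕ) : unitCube d = WithLp.ofLp ⁻¹' Set.Icc 0 1 := by
  ext p
  simp [unitCube, Pi.le_def, forall_and]

theorem isCompact_unitCube (d : ℕ) : IsCompact (unitCube d) := by
  rw [unitCube_eq_preimage_ofLp]
  exact (PiLp.homeomorph 2 fun _ : Fin d => ℝ).isCompact_preimage.2 isCompact_Icc

theorem volume_real_unitCube (d : ℕ) : volume.real (unitCube d) = 1 := by
  rw [measureReal_def, unitCube_eq_preimage_ofLp,
    (PiLp.volume_preserving_ofLp _).measure_preimage measurableSet_Icc.nullMeasurableSet]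
  simp [Real.volume_Icc_pi]

theorem exists_weights_with_prescribed_volumes_general
    (d N : ℕ) (hN : 1 ≤ N)
    (x : Fin N → EuclideanSpace ℝ (Fin d))
    (hx : Function.Injective x)
    (ν : Fin N → ℝ) (hν : ∀ i, 0 < ν i) (hsum : ∑ i, ν i = 1) :
    ∃ ψ : Fin N → ℝ, ∀ i,
      volume (lagCell (unitCube d) x ψ i) = ENNReal.ofReal (ν i) := by
  have : NeZero N := ⟨by omega⟩
  exact exists_measure_lagCell_eq_ofReal (isCompact_unitCube d) volume hx hν
    (by rw [hsum, volume_real_unitCube])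

/-- Existence of weights realizing prescribed cell volumes (semi-discrete optimal transport). -/
theorem exists_weights_with_prescribed_volumes
    (d N : ℕ) (hd : 1 ≤ d) (hN : 1 ≤ N)
    (x : Fin N → EuclideanSpace ℝ (Fin d))
    (hxΩ : ∀ i, x i ∈ unitCube d)
    (hx : Function.Injective x)
    (ν : Fin N → ℝ) (hν : ∀ i, 0 < ν i) (hsum : ∑ i, ν i = 1) :
    ∃ ψ : Fin N → ℝ, ∀ i,
      volume (lagCell (unitCube d) x ψ i) = ENNReal.ofReal (ν i) :=
  exists_weights_with_prescribed_volumes_general d N hN x hx ν hν hsum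
end

section
/- Let d ≥ 1, let Ω = [0,1]^d, let x_1, …, x_N be pairwise distinct points of Ω, and let ν_1, …, ν_N be strictly positive real numbers with ν_1 + ⋯ + ν_N = 1. If ψ and ψ′ are two vectors in ℝ^N such that the Lebesgue volume of Lag_i^ψ and of Lag_i^{ψ′} both equal ν_i for every i, then there is a constant c ∈ ℝ with ψ′_i = ψ_i + c for all i. -/
/-!
Let `c` be the largest value of `ψ' - ψ` and `S` the set of indices attaining it. Passing from `ψ`
to `ψ'` raises the weights of `S` by `c` and all others by less, so every `ψ`-cell indexed by `S`
lies in the union of the `ψ'`-cells indexed by `S`, and so does the layer `0 < F < δ`, where `F` is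
the least power distance to the sites of `S` minus the least one to the other sites and `δ` is
the gap below `c`. If `ψ' - ψ` is not constant, `F` is `≤ 0` on a cell of `S` and `> 0` on part of
a cell outside `S` (its zero set lies in finitely many hyperplanes), so by connectedness the layer
meets the convex body `[0,1]^d` in an open set of positive volume. Hence the `ψ'`-cells of `S` have
strictly larger total volume than the `ψ`-cells of `S`, yet both totals are `∑_{i ∈ S} ν_i`.
-/

open MeasureTheory

open Set

section Measure

variable {E : Type*} [NormedAddCommGroup E] [MeasurableSpace E]

theorem Convex.measure_inter_pos_of_isOpen [NormedSpace ℝ E] {μ : Measure E}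
    [μ.IsOpenPosMeasure] {Ω U : Set E} (hΩ : Convex ℝ Ω) (hint : (interior Ω).Nonempty)
    (hU : IsOpen U) (hUΩ : (U ∩ Ω).Nonempty) : 0 < μ (U ∩ Ω) := by
  obtain ⟨p, hpU, hpΩ⟩ := hUΩ
  have hp : p ∈ closure (interior Ω) := by
    rw [hΩ.closure_interior_eq_closure_of_nonempty_interior hint]
    exact subset_closure hpΩ
  obtain ⟨q, hqU, hq⟩ := mem_closure_iff.1 hp U hU hpU
  exact ((hU.inter isOpen_interior).measure_pos μ ⟨q, hqU, hq⟩).trans_le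
    (measure_mono (inter_subset_inter_right _ interior_subset))

theorem Convex.measure_preimage_Ioo_inter_pos [NormedSpace ℝ E] {μ : Measure E}
    [μ.IsOpenPosMeasure] {Ω : Set E} (hΩ : Convex ℝ Ω) (hint : (interior Ω).Nonempty)
    {F : E → ℝ} (hF : Continuous F) {a b : E} (ha : a ∈ Ω) (hb : b ∈ Ω) (hFa : F a ≤ 0)
    (hFb : 0 < F b) {δ : ℝ} (hδ : 0 < δ) : 0 < μ (F ⁻¹' Ioo 0 δ ∩ Ω) := by
  have ht : min (F b) δ / 2 ∈ Ioo 0 δ := ⟨by positivity, by linarith [min_le_right (F b) δ]⟩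
  obtain ⟨p, hpΩ, hpt⟩ := hΩ.isPreconnected.intermediate_value ha hb hF.continuousOn
    ⟨hFa.trans ht.1.le, by linarith [min_le_left (F b) δ, ht.1]⟩
  exact hΩ.measure_inter_pos_of_isOpen hint (isOpen_Ioo.preimage hF)
    ⟨p, show F p ∈ Ioo 0 δ from hpt ▸ ht, hpΩ⟩

theorem MeasureTheory.Measure.addHaar_setOf_linearMap_eq [NormedSpace ℝ E]
    [FiniteDimensional ℝ E] [BorelSpace E] (μ : Measure E) [μ.IsAddHaarMeasure]
    {L : E →ₗ[ℝ] ℝ} (hL : L ≠ 0) (c : ℝ) : μ {p | L p = c} = 0 := by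
  have hne : (AffineSubspace.mk' c ⊥).comap L.toAffineMap ≠ ⊤ := by
    intro htop
    have hall (p : E) : L p = c := by
      have hp : p ∈ (AffineSubspace.mk' c ⊥).comap L.toAffineMap :=
        htop ▸ AffineSubspace.mem_top ℝ E p
      simpa [sub_eq_zero] using hp
    exact hL (LinearMap.ext fun p => (hall p).trans ((hall 0).symm.trans L.map_zero))
  convert μ.addHaar_affineSubspace _ hne
  ext p
  simp [sub_eq_zero]

theorem MeasureTheory.Measure.addHaar_setOf_norm_sub_sq_sub_eq [InnerProductSpace ℝ E]
    [FiniteDimensional ℝ E] [BorelSpace E] (μ : Measure E) [μ.IsAddHaarMeasure] {a b : E}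
    (hab : a ≠ b) (s t : ℝ) :
    μ {p | ‖p - a‖ ^ 2 - s = ‖p - b‖ ^ 2 - t} = 0 := by
  have hL : innerₛₗ ℝ (b - a) ≠ 0 := fun h =>
    sub_ne_zero.2 hab.symm (inner_self_eq_zero.1 (LinearMap.congr_fun h (b - a)))
  convert μ.addHaar_setOf_linearMap_eq hL ((s - t - ‖a‖ ^ 2 + ‖b‖ ^ 2) / 2) using 2
  ext p
  simp only [mem_ofPred_eq, innerₛₗ_apply_apply, inner_sub_left, real_inner_comm p,
    norm_sub_sq_real]
  constructor <;> intro h <;> linarith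

end Measure

theorem convex_unitCube (d : ℕ) : Convex ℝ (unitCube d) := fun p hp q hq a b ha hb hab k => by
  simpa using convex_Icc (0 : ℝ) 1 (hp k) (hq k) ha hb hab

theorem isClosed_unitCube (d : ℕ) : IsClosed (unitCube d) := by
  simp only [unitCube, ofPred_forall]
  exact isClosed_iInter fun k => isClosed_Icc.preimage (PiLp.continuous_apply 2 _ k)

theorem interior_unitCube_nonempty (d : ℕ) : (interior (unitCube d)).Nonempty := by
  set m : EuclideanSpace ℝ (Fin d) := WithLp.toLp 2 fun _ => 1 / 2
  refine ⟨m, interior_maximal (fun p hp k => ?_) Metric.isOpen_ball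
    (Metric.mem_ball_self one_half_pos)⟩
  have hk : |p k - 1 / 2| < 1 / 2 :=
    (PiLp.dist_apply_le p m k).trans_lt (Metric.mem_ball.1 hp)
  constructor <;> linarith [abs_lt.1 hk]

section Laguerre

variable {d N : ℕ} {Ω : Set (EuclideanSpace ℝ (Fin d))} {x : Fin N → EuclideanSpace ℝ (Fin d)}
  {ψ ψ' : Fin N → ℝ}

theorem measurableSet_lagCell (hΩ : MeasurableSet Ω) (i : Fin N) :
    MeasurableSet (lagCell Ω x ψ i) := by
  have : lagCell Ω x ψ i = Ω ∩ ⋂ j, {p | ‖p - x i‖ ^ 2 - ψ i ≤ ‖p - x j‖ ^ 2 - ψ j} := by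
    ext p; simp [lagCell]
  rw [this]
  exact hΩ.inter (MeasurableSet.iInter fun j => measurableSet_le (by fun_prop) (by fun_prop))

theorem volume_lagCell_inter_lagCell (hx : Function.Injective x) {i j : Fin N} (hij : i ≠ j) :
    volume (lagCell Ω x ψ i ∩ lagCell Ω x ψ j) = 0 :=
  measure_mono_null (fun _ ⟨⟨_, hi⟩, _, hj⟩ => le_antisymm (hi j) (hj i))
    (volume.addHaar_setOf_norm_sub_sq_sub_eq (hx.ne hij) (ψ i) (ψ j))

theorem volume_biUnion_lagCell (hΩ : MeasurableSet Ω) (hx : Function.Injective x)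
    (S : Finset (Fin N)) :
    volume (⋃ i ∈ S, lagCell Ω x ψ i) = ∑ i ∈ S, volume (lagCell Ω x ψ i) :=
  measure_biUnion_finset₀ (fun _ _ _ _ hij => volume_lagCell_inter_lagCell hx hij)
    fun i _ => (measurableSet_lagCell hΩ i).nullMeasurableSet

noncomputable def powerMin (x : Fin N → EuclideanSpace ℝ (Fin d)) (ψ : Fin N → ℝ)
    (S : Finset (Fin N)) (hS : S.Nonempty) (p : EuclideanSpace ℝ (Fin d)) : ℝ :=
  S.inf' hS fun k => ‖p - x k‖ ^ 2 - ψ k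

noncomputable def powerGap (x : Fin N → EuclideanSpace ℝ (Fin d)) (ψ : Fin N → ℝ)
    (S : Finset (Fin N)) (hS : S.Nonempty) (hSc : Sᶜ.Nonempty) (p : EuclideanSpace ℝ (Fin d)) : ℝ :=
  powerMin x ψ S hS p - powerMin x ψ Sᶜ hSc p

variable {S : Finset (Fin N)}

theorem powerMin_le (hS : S.Nonempty) {i : Fin N} (hi : i ∈ S) (p : EuclideanSpace ℝ (Fin d)) :
    powerMin x ψ S hS p ≤ ‖p - x i‖ ^ 2 - ψ i :=
  S.inf'_le _ hi

theorem le_powerMin_of_mem_lagCell (hS : S.Nonempty) {i : Fin N} {p : EuclideanSpace ℝ (Fin d)}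
    (hp : p ∈ lagCell Ω x ψ i) : ‖p - x i‖ ^ 2 - ψ i ≤ powerMin x ψ S hS p :=
  S.le_inf' hS _ fun j _ => hp.2 j

theorem exists_powerMin_eq (hS : S.Nonempty) (p : EuclideanSpace ℝ (Fin d)) :
    ∃ i ∈ S, powerMin x ψ S hS p = ‖p - x i‖ ^ 2 - ψ i :=
  S.exists_mem_eq_inf' hS _

theorem continuous_powerGap (hS : S.Nonempty) (hSc : Sᶜ.Nonempty) :
    Continuous (powerGap x ψ S hS hSc) :=
  (Continuous.finset_inf'_apply hS fun _ _ => by fun_prop).sub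
    (Continuous.finset_inf'_apply hSc fun _ _ => by fun_prop)

theorem powerGap_nonpos_of_mem_lagCell (hS : S.Nonempty) (hSc : Sᶜ.Nonempty) {i : Fin N}
    (hi : i ∈ S) {p : EuclideanSpace ℝ (Fin d)} (hp : p ∈ lagCell Ω x ψ i) :
    powerGap x ψ S hS hSc p ≤ 0 :=
  sub_nonpos.2 ((powerMin_le hS hi p).trans (le_powerMin_of_mem_lagCell hSc hp))

theorem powerGap_nonneg_of_mem_lagCell (hS : S.Nonempty) (hSc : Sᶜ.Nonempty) {j : Fin N}
    (hj : j ∉ S) {p : EuclideanSpace ℝ (Fin d)} (hp : p ∈ lagCell Ω x ψ j) :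
    0 ≤ powerGap x ψ S hS hSc p :=
  sub_nonneg.2 ((powerMin_le hSc (Finset.mem_compl.2 hj) p).trans
    (le_powerMin_of_mem_lagCell hS hp))

theorem volume_setOf_powerGap_eq_zero (hx : Function.Injective x) (hS : S.Nonempty)
    (hSc : Sᶜ.Nonempty) : volume {p | powerGap x ψ S hS hSc p = 0} = 0 := by
  refine measure_mono_null (t := ⋃ ij : {ij : Fin N × Fin N // ij.1 ≠ ij.2},
      {p | ‖p - x ij.1.1‖ ^ 2 - ψ ij.1.1 = ‖p - x ij.1.2‖ ^ 2 - ψ ij.1.2}) ?_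
    (measure_iUnion_null fun ij => volume.addHaar_setOf_norm_sub_sq_sub_eq (hx.ne ij.2) _ _)
  intro p hp
  obtain ⟨i, hi, hpi⟩ := exists_powerMin_eq (x := x) (ψ := ψ) hS p
  obtain ⟨j, hj, hpj⟩ := exists_powerMin_eq (x := x) (ψ := ψ) hSc p
  exact mem_iUnion.2 ⟨⟨(i, j), fun h : i = j => Finset.mem_compl.1 hj (h ▸ hi)⟩,
    hpi.symm.trans ((sub_eq_zero.1 hp).trans hpj)⟩

theorem exists_mem_lagCell_of_powerGap_le (hS : S.Nonempty) (hSc : Sᶜ.Nonempty) {c δ : ℝ}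
    (hψS : ∀ i ∈ S, ψ' i = ψ i + c) (hψSc : ∀ j ∉ S, ψ' j ≤ ψ j + c - δ)
    {p : EuclideanSpace ℝ (Fin d)} (hp : p ∈ Ω) (hpδ : powerGap x ψ S hS hSc p ≤ δ) :
    ∃ i ∈ S, p ∈ lagCell Ω x ψ' i := by
  obtain ⟨i, hi, hpi⟩ := exists_powerMin_eq (x := x) (ψ := ψ) hS p
  refine ⟨i, hi, hp, fun j => ?_⟩
  unfold powerGap at hpδ
  by_cases hj : j ∈ S
  · linarith [powerMin_le (x := x) (ψ := ψ) hS hj p, hψS i hi, hψS j hj]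
  · linarith [powerMin_le (x := x) (ψ := ψ) hSc (Finset.mem_compl.2 hj) p, hψS i hi, hψSc j hj]

theorem volume_preimage_powerGap_Ioo_inter_pos (hΩ : Convex ℝ Ω) (hint : (interior Ω).Nonempty)
    (hx : Function.Injective x) (hS : S.Nonempty) (hSc : Sᶜ.Nonempty) {i j : Fin N}
    (hi : i ∈ S) (hj : j ∉ S) (hvi : volume (lagCell Ω x ψ i) ≠ 0)
    (hvj : volume (lagCell Ω x ψ j) ≠ 0) {δ : ℝ} (hδ : 0 < δ) :
    0 < volume (powerGap x ψ S hS hSc ⁻¹' Ioo 0 δ ∩ Ω) := by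
  obtain ⟨a, ha⟩ := nonempty_of_measure_ne_zero hvi
  obtain ⟨b, hb, hbF⟩ : (lagCell Ω x ψ j \ {p | powerGap x ψ S hS hSc p = 0}).Nonempty :=
    nonempty_of_measure_ne_zero <| by
      rwa [measure_sdiff_null (volume_setOf_powerGap_eq_zero hx hS hSc)]
  exact hΩ.measure_preimage_Ioo_inter_pos hint (continuous_powerGap hS hSc) ha.1 hb.1
    (powerGap_nonpos_of_mem_lagCell hS hSc hi ha)
    ((powerGap_nonneg_of_mem_lagCell hS hSc hj hb).lt_of_ne' hbF) hδ

theorem sum_volume_lagCell_lt (hΩ : Convex ℝ Ω) (hint : (interior Ω).Nonempty)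
    (hΩm : MeasurableSet Ω) (hx : Function.Injective x) {c : ℝ}
    (hψS : ∀ i ∈ S, ψ' i = ψ i + c) (hψSc : ∀ j ∉ S, ψ' j < ψ j + c) {i j : Fin N}
    (hi : i ∈ S) (hj : j ∉ S) (hvi : volume (lagCell Ω x ψ i) ≠ 0)
    (hvj : volume (lagCell Ω x ψ j) ≠ 0) (hfin : ∑ k ∈ S, volume (lagCell Ω x ψ k) ≠ ⊤) :
    ∑ k ∈ S, volume (lagCell Ω x ψ k) < ∑ k ∈ S, volume (lagCell Ω x ψ' k) := by
  have hS : S.Nonempty := ⟨i, hi⟩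
  have hSc : Sᶜ.Nonempty := ⟨j, Finset.mem_compl.2 hj⟩
  obtain ⟨δ, hδ, hψSc_le⟩ : ∃ δ > 0, ∀ k ∉ S, ψ' k ≤ ψ k + c - δ := by
    obtain ⟨k, hk, hmax⟩ := Sᶜ.exists_max_image (fun k => ψ' k - ψ k) hSc
    exact ⟨ψ k + c - ψ' k, by linarith [hψSc k (Finset.mem_compl.1 hk)],
      fun l hl => by linarith [hmax l (Finset.mem_compl.2 hl)]⟩
  set A := ⋃ k ∈ S, lagCell Ω x ψ k
  set M := powerGap x ψ S hS hSc ⁻¹' Ioo 0 δ ∩ Ω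
  have hAM : A ∪ M ⊆ ⋃ k ∈ S, lagCell Ω x ψ' k := by
    rintro p (hp | ⟨hpM, hpΩ⟩)
    · obtain ⟨k, hk, hp⟩ := mem_iUnion₂.1 hp
      obtain ⟨l, hl, hp'⟩ := exists_mem_lagCell_of_powerGap_le hS hSc hψS hψSc_le hp.1
        ((powerGap_nonpos_of_mem_lagCell hS hSc hk hp).trans hδ.le)
      exact mem_biUnion hl hp'
    · obtain ⟨l, hl, hp'⟩ := exists_mem_lagCell_of_powerGap_le hS hSc hψS hψSc_le hpΩ hpM.2.le
      exact mem_biUnion hl hp'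
  have hdisj : Disjoint A M := by
    refine disjoint_left.2 fun p hp hpM => ?_
    obtain ⟨k, hk, hp⟩ := mem_iUnion₂.1 hp
    exact (powerGap_nonpos_of_mem_lagCell hS hSc hk hp).not_gt hpM.1.1
  simp only [← volume_biUnion_lagCell hΩm hx] at hfin ⊢
  calc volume A
      < volume A + volume M := ENNReal.lt_add_right hfin
        (volume_preimage_powerGap_Ioo_inter_pos hΩ hint hx hS hSc hi hj hvi hvj hδ).ne'
    _ = volume (A ∪ M) := (measure_union hdisj
        (((continuous_powerGap hS hSc).measurable measurableSet_Ioo).inter hΩm)).symm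
    _ ≤ _ := measure_mono hAM

end Laguerre

theorem weights_unique_up_to_constant_general
    (d N : ℕ)
    (x : Fin N → EuclideanSpace ℝ (Fin d))
    (hx : Function.Injective x)
    (ν : Fin N → ℝ) (hν : ∀ i, 0 < ν i)
    (ψ ψ' : Fin N → ℝ)
    (h : ∀ i, volume (lagCell (unitCube d) x ψ i) = ENNReal.ofReal (ν i))
    (h' : ∀ i, volume (lagCell (unitCube d) x ψ' i) = ENNReal.ofReal (ν i)) :
    ∃ c : ℝ, ∀ i, ψ' i = ψ i + c := by
  rcases isEmpty_or_nonempty (Fin N) with _ | _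
  · exact ⟨0, isEmptyElim⟩
  obtain ⟨i, -, hmax⟩ :=
    Finset.univ.exists_max_image (fun k => ψ' k - ψ k) Finset.univ_nonempty
  set c := ψ' i - ψ i
  refine ⟨c, fun j => by_contra fun hj => ?_⟩
  set S := Finset.univ.filter fun k => ψ' k = ψ k + c
  have hψS (k : Fin N) (hk : k ∈ S) : ψ' k = ψ k + c := by simpa [S] using hk
  have hψSc (k : Fin N) (hk : k ∉ S) : ψ' k < ψ k + c :=
    lt_of_le_of_ne (by linarith [hmax k (Finset.mem_univ k)]) (by simpa [S] using hk)
  have hvol (k : Fin N) : volume (lagCell (unitCube d) x ψ k) ≠ 0 := by simpa [h k] using hν k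
  have key := sum_volume_lagCell_lt (convex_unitCube d) (interior_unitCube_nonempty d)
    (isClosed_unitCube d).measurableSet hx hψS hψSc (i := i) (j := j) (by simp [S, c])
    (by simpa [S] using hj) (hvol i) (hvol j) (by simp [h])
  simp only [h, h'] at key
  exact lt_irrefl _ key

/-- Uniqueness, up to an additive constant, of weights realizing prescribed cell volumes. -/
theorem weights_unique_up_to_constant
    (d N : ℕ) (hd : 1 ≤ d) (hN : 1 ≤ N)
    (x : Fin N → EuclideanSpace ℝ (Fin d))
    (hxΩ : ∀ i, x i ∈ unitCube d)
    (hx : Function.Injective x)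
    (ν : Fin N → ℝ) (hν : ∀ i, 0 < ν i) (hsum : ∑ i, ν i = 1)
    (ψ ψ' : Fin N → ℝ)
    (h : ∀ i, volume (lagCell (unitCube d) x ψ i) = ENNReal.ofReal (ν i))
    (h' : ∀ i, volume (lagCell (unitCube d) x ψ' i) = ENNReal.ofReal (ν i)) :
    ∃ c : ℝ, ∀ i, ψ' i = ψ i + c :=
  weights_unique_up_to_constant_general d N x hx ν hν ψ ψ' h h'
end

section
/- Let Ω ⊆ ℝ^d be a bounded measurable set, let x_1, …, x_N ∈ ℝ^d be pairwise distinct, let ν ∈ ℝ^N, and let K(ψ) = ∫_Ω min_i (‖x − x_i‖² − ψ_i) dx + Σ_i ψ_i ν_i. Then for every ψ ∈ ℝ^N and every index i, the function t ↦ K(ψ + t e_i) (where e_i is the i-th standard basis vector) is differentiable at t = 0 with derivative ν_i − |Lag_i^ψ|, the Lebesgue volume of the Laguerre cell of index i. -/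
/-!
For fixed `p`, the integrand `t ↦ minⱼ (‖p - xⱼ‖² - ψⱼ - t δᵢⱼ)` is `1`-Lipschitz, so the
derivative can be taken under the integral sign. If `i` is the unique minimizing index at `p`, the
integrand is `‖p - xᵢ‖² - ψᵢ - t` near `t = 0`, with derivative `-1`; if another index does
strictly better, it is locally constant. The points where `i` ties with some `j ≠ i` lie on
hyperplanes (as `xᵢ ≠ xⱼ`), hence form a null set, so the derivative of the integral is
`-|Lagᵢ^ψ|`; the linear term contributes `νᵢ`.
-/

open MeasureTheory Filter Topology Finset

theorem LipschitzWith.finset_inf' {α ι : Type*} [PseudoEMetricSpace α] {s : Finset ι}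
    (H : s.Nonempty) {f : ι → α → ℝ} {K : NNReal} (hf : ∀ j ∈ s, LipschitzWith K (f j)) :
    LipschitzWith K fun y => s.inf' H (f · y) := by
  have hinf : s.inf' H f = fun y => s.inf' H (f · y) := funext (Finset.inf'_apply H f)
  rw [← hinf]
  exact inf'_induction H f (p := LipschitzWith K) (fun g hg h hh => max_self K ▸ hg.min hh) hf

theorem hasDerivAt_integral_of_lipschitzWith {α E : Type*} [MeasurableSpace α]
    [NormedAddCommGroup E] [NormedSpace ℝ E] [CompleteSpace E]
    {μ : Measure α} [IsFiniteMeasure μ] {F : ℝ → α → E} {F' : α → E} {t₀ : ℝ} {K : NNReal}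
    (hF_meas : ∀ t, AEStronglyMeasurable (F t) μ) (hF_int : Integrable (F t₀) μ)
    (hF'_meas : AEStronglyMeasurable F' μ) (h_lip : ∀ᵐ p ∂μ, LipschitzWith K (F · p))
    (h_diff : ∀ᵐ p ∂μ, HasDerivAt (F · p) (F' p) t₀) :
    HasDerivAt (fun t => ∫ p, F t p ∂μ) (∫ p, F' p ∂μ) t₀ :=
  (hasDerivAt_integral_of_dominated_loc_of_lip (bound := fun _ => (K : ℝ)) univ_mem
    (.of_forall hF_meas) hF_int hF'_meas
    (h_lip.mono fun p hp => by simpa using hp) (integrable_const _) h_diff).2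

theorem MeasureTheory.Measure.addHaar_linearMap_preimage_singleton {E : Type*}
    [NormedAddCommGroup E] [NormedSpace ℝ E] [MeasurableSpace E] [BorelSpace E]
    [FiniteDimensional ℝ E]
    (μ : Measure E) [μ.IsAddHaarMeasure] {ℓ : E →ₗ[ℝ] ℝ} (hℓ : ℓ ≠ 0) (c : ℝ) :
    μ (ℓ ⁻¹' {c}) = 0 := by
  by_cases hc : ∃ p₀, ℓ p₀ = c
  · obtain ⟨p₀, rfl⟩ := hc
    have hpre : ℓ ⁻¹' {ℓ p₀} = (· + -p₀) ⁻¹' (LinearMap.ker ℓ : Set E) := by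
      ext p
      simp [sub_eq_zero, ← sub_eq_add_neg]
    rw [hpre, measure_preimage_add_right]
    exact Measure.addHaar_submodule μ _ (mt LinearMap.ker_eq_top.1 hℓ)
  · push Not at hc
    simp [Set.preimage, hc]

theorem ae_norm_sub_sq_sub_ne {E : Type*} [NormedAddCommGroup E] [InnerProductSpace ℝ E]
    [MeasurableSpace E] [BorelSpace E] [FiniteDimensional ℝ E]
    (μ : Measure E) [μ.IsAddHaarMeasure] {a b : E} (hab : a ≠ b) (s r : ℝ) :
    ∀ᵐ p ∂μ, ‖p - a‖ ^ 2 - s ≠ ‖p - b‖ ^ 2 - r := by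
  have hℓ : innerₛₗ ℝ (b - a) ≠ 0 := fun h => by
    have := LinearMap.congr_fun h (b - a)
    rw [innerₛₗ_apply_apply, real_inner_self_eq_norm_sq, LinearMap.zero_apply] at this
    exact hab (sub_eq_zero.1 (by simpa using this)).symm
  have hties : {p | ‖p - a‖ ^ 2 - s = ‖p - b‖ ^ 2 - r} =
      innerₛₗ ℝ (b - a) ⁻¹' {(‖b‖ ^ 2 - ‖a‖ ^ 2 + s - r) / 2} := by
    ext p
    simp only [Set.mem_ofPred_eq, Set.mem_preimage, Set.mem_singleton_iff, innerₛₗ_apply_apply,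
      norm_sub_sq_real, inner_sub_right, real_inner_comm p]
    constructor <;> intro h <;> linarith
  rw [ae_iff]
  simpa only [ne_eq, not_not, hties] using Measure.addHaar_linearMap_preimage_singleton μ hℓ _

theorem ae_forall_ne_norm_sub_sq_sub_ne {E ι : Type*} [NormedAddCommGroup E]
    [InnerProductSpace ℝ E] [MeasurableSpace E] [BorelSpace E] [FiniteDimensional ℝ E]
    [Countable ι] (μ : Measure E) [μ.IsAddHaarMeasure] {x : ι → E} (hx : Function.Injective x)
    (ψ : ι → ℝ) (i : ι) :
    ∀ᵐ p ∂μ, ∀ j ≠ i, ‖p - x i‖ ^ 2 - ψ i ≠ ‖p - x j‖ ^ 2 - ψ j := by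
  refine ae_all_iff.2 fun j => ?_
  rcases eq_or_ne j i with rfl | hj
  · exact .of_forall fun _ hjj => (hjj rfl).elim
  · exact (ae_norm_sub_sq_sub_ne μ (hx.ne hj.symm) _ _).mono fun _ h _ => h

section ShiftedMinimum

variable {ι : Type*} [Fintype ι] [DecidableEq ι] (a ψ : ι → ℝ) (i : ι)

theorem lipschitzWith_inf'_sub_add_mul_single :
    LipschitzWith 1 fun t : ℝ =>
      univ.inf' ⟨i, mem_univ i⟩ fun j => a j - (ψ j + t * (Pi.single i (1 : ℝ) : ι → ℝ) j) := by
  refine LipschitzWith.finset_inf' _ fun j _ => LipschitzWith.of_dist_le_mul fun s t => ?_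
  have he : |(Pi.single i (1 : ℝ) : ι → ℝ) j| ≤ 1 := by
    rcases eq_or_ne j i with rfl | hj <;> simp [*]
  rw [Real.dist_eq, Real.dist_eq, NNReal.coe_one, one_mul, abs_sub_comm s t]
  calc |a j - (ψ j + s * _) - (a j - (ψ j + t * _))|
      = |t - s| * |(Pi.single i (1 : ℝ) : ι → ℝ) j| := by rw [← abs_mul]; congr 1; ring
    _ ≤ |t - s| := mul_le_of_le_one_right (abs_nonneg _) he

theorem inf'_sub_add_mul_single_eventuallyEq_of_forall_lt
    (h : ∀ j ≠ i, a i - ψ i < a j - ψ j) :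
    (fun t : ℝ => univ.inf' ⟨i, mem_univ i⟩
        fun j => a j - (ψ j + t * (Pi.single i (1 : ℝ) : ι → ℝ) j))
      =ᶠ[𝓝 0] fun t => a i - (ψ i + t) := by
  have hnear : ∀ᶠ t in 𝓝 (0 : ℝ), ∀ j ≠ i, a i - ψ i - (a j - ψ j) < t :=
    eventually_all.2 fun j => by
      rcases eq_or_ne j i with rfl | hj
      · exact .of_forall fun _ hii => (hii rfl).elim
      · exact (eventually_gt_nhds (sub_neg.2 (h j hj))).mono fun _ ht _ => ht
  filter_upwards [hnear] with t ht
  refine le_antisymm (inf'_le_of_le _ (mem_univ i) (by simp)) (le_inf' _ _ fun j _ => ?_)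
  rcases eq_or_ne j i with rfl | hj
  · simp
  · have := ht j hj
    simp only [Pi.single_eq_of_ne hj, mul_zero, add_zero]
    linarith

theorem inf'_sub_add_mul_single_eventuallyEq_of_lt {k : ι}
    (hk : a k - ψ k < a i - ψ i) :
    (fun t : ℝ => univ.inf' ⟨i, mem_univ i⟩
        fun j => a j - (ψ j + t * (Pi.single i (1 : ℝ) : ι → ℝ) j))
      =ᶠ[𝓝 0] fun _ => (univ.erase i).inf' ⟨k, mem_erase.2 ⟨fun h => (h ▸ hk).false, mem_univ k⟩⟩
        fun j => a j - ψ j := by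
  have hki : k ≠ i := fun h => (h ▸ hk).false
  filter_upwards [eventually_lt_nhds (sub_pos.2 hk)] with t ht
  refine le_antisymm (le_inf' _ _ fun j hj => ?_) (le_inf' _ _ fun j _ => ?_)
  · refine inf'_le_of_le _ (mem_univ j) ?_
    simp [Pi.single_eq_of_ne (ne_of_mem_erase hj)]
  · rcases eq_or_ne j i with rfl | hj
    · have := inf'_le (fun j => a j - ψ j) (mem_erase.2 ⟨hki, mem_univ k⟩)
      simp only [Pi.single_eq_same, mul_one]
      linarith
    · simpa [Pi.single_eq_of_ne hj] using
        inf'_le (fun j => a j - ψ j) (mem_erase.2 ⟨hj, mem_univ j⟩)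

theorem hasDerivAt_inf'_sub_add_mul_single (hi : ∀ j ≠ i, a i - ψ i ≠ a j - ψ j) :
    HasDerivAt
      (fun t : ℝ => univ.inf' ⟨i, mem_univ i⟩
        fun j => a j - (ψ j + t * (Pi.single i (1 : ℝ) : ι → ℝ) j))
      (if ∀ j, a i - ψ i ≤ a j - ψ j then -1 else 0) 0 := by
  split_ifs with hmin
  · have hlin : HasDerivAt (fun t : ℝ => a i - (ψ i + t)) (-1) 0 :=
      ((hasDerivAt_id 0).const_add (ψ i)).const_sub (a i)
    exact hlin.congr_of_eventuallyEq <| inf'_sub_add_mul_single_eventuallyEq_of_forall_lt a ψ i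
      fun j hj => (hmin j).lt_of_ne (hi j hj)
  · push Not at hmin
    obtain ⟨k, hk⟩ := hmin
    exact (hasDerivAt_const _ _).congr_of_eventuallyEq <|
      inf'_sub_add_mul_single_eventuallyEq_of_lt a ψ i hk

theorem hasDerivAt_sum_add_mul_single_mul (ν : ι → ℝ) (t₀ : ℝ) :
    HasDerivAt (fun t : ℝ => ∑ j, (ψ j + t * (Pi.single i (1 : ℝ) : ι → ℝ) j) * ν j)
      (ν i) t₀ := by
  have hterm : ∀ j ∈ univ,
      HasDerivAt (fun t : ℝ => (ψ j + t * (Pi.single i (1 : ℝ) : ι → ℝ) j) * ν j)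
        ((Pi.single i (1 : ℝ) : ι → ℝ) j * ν j) t₀ := fun j _ => by
    simpa using
      (((hasDerivAt_id t₀).mul_const ((Pi.single i (1 : ℝ) : ι → ℝ) j)).const_add (ψ j)).mul_const
        (ν j)
  simpa [Pi.single_apply] using HasDerivAt.fun_sum hterm

end ShiftedMinimum

theorem kantorovich_dual_partial_deriv_general
    (d N : ℕ)
    (Ω : Set (EuclideanSpace ℝ (Fin d)))
    (hΩb : Bornology.IsBounded Ω)
    (x : Fin N → EuclideanSpace ℝ (Fin d)) (hx : Function.Injective x)
    (ν : Fin N → ℝ) (ψ : Fin N → ℝ) (i : Fin N) :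
    HasDerivAt (fun t : ℝ =>
        (∫ p in Ω, Finset.univ.inf' ⟨i, Finset.mem_univ i⟩
            (fun j => ‖p - x j‖ ^ 2 - (ψ j + t * (Pi.single i (1 : ℝ) : Fin N → ℝ) j))) +
          ∑ j, (ψ j + t * (Pi.single i (1 : ℝ) : Fin N → ℝ) j) * ν j)
      (ν i - (volume (lagCell Ω x ψ i)).toReal) 0 := by
  set S := {p : EuclideanSpace ℝ (Fin d) | ∀ j, ‖p - x i‖ ^ 2 - ψ i ≤ ‖p - x j‖ ^ 2 - ψ j}
  have hS : MeasurableSet S := by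
    simp only [S, Set.ofPred_forall]
    exact .iInter fun j => measurableSet_le (by fun_prop) (by fun_prop)
  have : IsFiniteMeasure (volume.restrict Ω) := isFiniteMeasure_restrict.2 hΩb.measure_lt_top.ne
  have hcont : ∀ t : ℝ, Continuous fun p : EuclideanSpace ℝ (Fin d) =>
      univ.inf' ⟨i, mem_univ i⟩
        fun j => ‖p - x j‖ ^ 2 - (ψ j + t * (Pi.single i (1 : ℝ) : Fin N → ℝ) j) :=
    fun t => Continuous.finset_inf'_apply _ fun j _ => by fun_prop
  have hK := hasDerivAt_integral_of_lipschitzWith (F' := S.indicator fun _ => -1)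
    (fun t => (hcont t).aestronglyMeasurable)
    (((hcont 0).continuousOn.integrableOn_compact hΩb.isCompact_closure).mono_set subset_closure)
    (measurable_const.indicator hS).aestronglyMeasurable
    (.of_forall fun p => lipschitzWith_inf'_sub_add_mul_single (‖p - x ·‖ ^ 2) ψ i)
    ((ae_restrict_of_ae (ae_forall_ne_norm_sub_sq_sub_ne volume hx ψ i)).mono fun p hp =>
      (hasDerivAt_inf'_sub_add_mul_single (‖p - x ·‖ ^ 2) ψ i hp).congr_deriv
        (by simp [Set.indicator_apply, S]))
  have hvol :
      ∫ p in Ω, S.indicator (fun _ => (-1 : ℝ)) p = -(volume (lagCell Ω x ψ i)).toReal := by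
    rw [integral_indicator_const _ hS, measureReal_restrict_apply hS, Set.inter_comm, smul_neg,
      smul_eq_mul, mul_one]
    rfl
  rw [hvol] at hK
  exact (hK.fun_add (hasDerivAt_sum_add_mul_single_mul ψ i ν 0)).congr_deriv (by ring)

/-- The Kantorovich dual functional `K` has partial derivative `νᵢ - |Lagᵢ^ψ|`
in the direction of the `i`-th standard basis vector. -/
theorem kantorovich_dual_partial_deriv
    (d N : ℕ)
    (Ω : Set (EuclideanSpace ℝ (Fin d)))
    (hΩm : MeasurableSet Ω) (hΩb : Bornology.IsBounded Ω)
    (x : Fin N → EuclideanSpace ℝ (Fin d)) (hx : Function.Injective x)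
    (ν : Fin N → ℝ) (ψ : Fin N → ℝ) (i : Fin N) :
    HasDerivAt (fun t : ℝ =>
        (∫ p in Ω, Finset.univ.inf' ⟨i, Finset.mem_univ i⟩
            (fun j => ‖p - x j‖ ^ 2 - (ψ j + t * (Pi.single i (1 : ℝ) : Fin N → ℝ) j))) +
          ∑ j, (ψ j + t * (Pi.single i (1 : ℝ) : Fin N → ℝ) j) * ν j)
      (ν i - (volume (lagCell Ω x ψ i)).toReal) 0 :=
  kantorovich_dual_partial_deriv_general d N Ω hΩb x hx ν ψ i
end

section
/- Let Ω ⊆ ℝ^d be a nonempty compact set, let x_1, …, x_N ∈ ℝ^d, and let ψ ∈ ℝ^N. Define ψ^c(x) = min_{1 ≤ j ≤ N} (‖x − x_j‖² − ψ_j) for x ∈ Ω, and ψ^{cc}_i = inf_{x ∈ Ω} (‖x − x_i‖² − ψ^c(x)). Then for every i one has ψ^{cc}_i ≥ ψ_i, and ψ^{cc}_i = ψ_i if and only if the Laguerre cell Lag_i^ψ is nonempty. Consequently ψ^{cc} = ψ if and only if Lag_i^ψ ≠ ∅ for all 1 ≤ i ≤ N. -/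
/-! For any cost `c`, the function `p ↦ c p i - ψᶜ p` is bounded below by `ψ i`, with equality
exactly where the minimum defining `ψᶜ p` is attained at `i`, i.e. on the Laguerre cell of `i`.
On a nonempty compact `Ω` this continuous function attains its infimum `ψᶜᶜ i`, so
`ψᶜᶜ i = ψ i` exactly when the cell meets `Ω`. -/

open MeasureTheory

open Set

theorem IsCompact.sInf_image_eq_iff {X α : Type*} [TopologicalSpace X]
    [ConditionallyCompleteLinearOrder α] [TopologicalSpace α] [ClosedIicTopology α]
    {s : Set X} (hs : IsCompact s) (hne : s.Nonempty) {g : X → α} (hg : ContinuousOn g s)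
    {a : α} (ha : ∀ p ∈ s, a ≤ g p) :
    sInf (g '' s) = a ↔ ∃ p ∈ s, g p = a := by
  constructor
  · rintro rfl
    obtain ⟨p, hp, hmin⟩ := hs.exists_sInf_image_eq hne hg
    exact ⟨p, hp, hmin.symm⟩
  · rintro ⟨p, hp, rfl⟩
    exact le_antisymm (csInf_le ⟨g p, forall_mem_image.2 ha⟩ (mem_image_of_mem g hp))
      (le_csInf (hne.image g) (forall_mem_image.2 ha))

section CTransform

variable {X ι : Type*} [Fintype ι] (c : X → ι → ℝ) (ψ : ι → ℝ)
  (hι : (Finset.univ : Finset ι).Nonempty)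

theorem le_sub_inf'_sub (p : X) (i : ι) :
    ψ i ≤ c p i - Finset.univ.inf' hι (fun j => c p j - ψ j) := by
  have := Finset.inf'_le (fun j => c p j - ψ j) (Finset.mem_univ i)
  linarith

theorem sub_inf'_sub_eq_iff (p : X) (i : ι) :
    c p i - Finset.univ.inf' hι (fun j => c p j - ψ j) = ψ i ↔
      ∀ j, c p i - ψ i ≤ c p j - ψ j := by
  have hle := Finset.inf'_le (fun j => c p j - ψ j) (Finset.mem_univ i)
  have hle_inf' : c p i - ψ i ≤ Finset.univ.inf' hι (fun j => c p j - ψ j) ↔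
      ∀ j, c p i - ψ i ≤ c p j - ψ j := by
    simp only [Finset.le_inf'_iff, Finset.mem_univ, true_implies]
  rw [← hle_inf']
  constructor <;> intro h <;> linarith

theorem le_sInf_sub_inf'_sub {Ω : Set X} (hΩ : Ω.Nonempty) (i : ι) :
    ψ i ≤ sInf ((fun p => c p i - Finset.univ.inf' hι (fun j => c p j - ψ j)) '' Ω) :=
  le_csInf (hΩ.image _) (forall_mem_image.2 fun p _ => le_sub_inf'_sub c ψ hι p i)

theorem sInf_sub_inf'_sub_eq_iff [TopologicalSpace X] (hc : ∀ j, Continuous (c · j))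
    {Ω : Set X} (hΩ : IsCompact Ω) (hne : Ω.Nonempty) (i : ι) :
    sInf ((fun p => c p i - Finset.univ.inf' hι (fun j => c p j - ψ j)) '' Ω) = ψ i ↔
      ∃ p ∈ Ω, ∀ j, c p i - ψ i ≤ c p j - ψ j := by
  have hcont : Continuous fun p => c p i - Finset.univ.inf' hι (fun j => c p j - ψ j) :=
    (hc i).sub (Continuous.finset_inf'_apply hι fun j _ => (hc j).sub continuous_const)
  rw [hΩ.sInf_image_eq_iff hne hcont.continuousOn fun p _ => le_sub_inf'_sub c ψ hι p i]
  simp only [sub_inf'_sub_eq_iff]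

end CTransform

/-- For the semi-discrete double Legendre–Fenchel transform `ψᶜᶜ`, one has `ψᶜᶜᵢ ≥ ψᵢ`,
with equality exactly when the `i`-th Laguerre cell is nonempty; hence `ψᶜᶜ = ψ` iff
all Laguerre cells are nonempty. -/
theorem double_transform_eq_iff_cells_nonempty
    (d N : ℕ) (hN : 0 < N)
    (Ω : Set (EuclideanSpace ℝ (Fin d)))
    (hΩne : Ω.Nonempty) (hΩc : IsCompact Ω)
    (x : Fin N → EuclideanSpace ℝ (Fin d)) (ψ : Fin N → ℝ) :
    let ψc : EuclideanSpace ℝ (Fin d) → ℝ := fun p =>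
      Finset.univ.inf' ⟨⟨0, hN⟩, Finset.mem_univ _⟩ (fun j => ‖p - x j‖ ^ 2 - ψ j)
    let ψcc : Fin N → ℝ := fun i => sInf ((fun p => ‖p - x i‖ ^ 2 - ψc p) '' Ω)
    (∀ i, ψ i ≤ ψcc i) ∧
      (∀ i, ψcc i = ψ i ↔ (lagCell Ω x ψ i).Nonempty) ∧
      (ψcc = ψ ↔ ∀ i, (lagCell Ω x ψ i).Nonempty) := by
  intro ψc ψcc
  have hcell : ∀ i, ψcc i = ψ i ↔ (lagCell Ω x ψ i).Nonempty := fun i =>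
    sInf_sub_inf'_sub_eq_iff (fun p j => ‖p - x j‖ ^ 2) ψ _
      (fun j => by fun_prop) hΩc hΩne i
  refine ⟨le_sInf_sub_inf'_sub (fun p j => ‖p - x j‖ ^ 2) ψ _ hΩne, hcell, ?_⟩
  rw [funext_iff]
  exact forall_congr' hcell
end
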